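/- arXiv:math/0407482 — 2 statements merged into one kernel-verified Lean document; each statement's English description precedes it below -/
import Mathlib

section
/- Let 2 ≤ q < ∞ and let T : X → Y have martingale cotype q with constant c. Define {x} := inf ( ‖x + Σ_{k=1}^n d_k‖_{L_q}^q − c^{−q} Σ_{k=1}^n ‖Td_k‖_{L_q}^q )^{1/q}, where the infimum is over all X-valued dyadic martingale difference sequences d_1,…,d_n. Then c^{−1}‖Tx‖ ≤ {x} ≤ ‖x‖ for all x ∈ X. -/
open MeasureTheory Finset

/-- The `L_q` norm of a function on `[0,1)`: `(∫₀¹ ‖f t‖^q dt)^(1/q)`. -/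
noncomputable def LqNorm {X : Type*} [NormedAddCommGroup X] (q : ℝ) (f : ℝ → X) : ℝ :=
  (∫ t in (0:ℝ)..1, ‖f t‖ ^ q) ^ (1/q)

/-- `f : [0,1) → X` is measurable with respect to the dyadic σ-algebra `F_k`,
i.e. constant on each dyadic interval `[i/2^k, (i+1)/2^k)`. -/
def DyadicMeas {X : Type*} (k : ℕ) (f : ℝ → X) : Prop :=
  ∀ s t : ℝ, s ∈ Set.Ico (0:ℝ) 1 → t ∈ Set.Ico (0:ℝ) 1 →
    ⌊s * 2 ^ k⌋ = ⌊t * 2 ^ k⌋ → f s = f t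

/-- `d` is a dyadic martingale difference at level `k`: it is `F_k`-measurable and
its value on the left half of each level-`(k-1)` dyadic interval is the negative of
its value on the right half (i.e. `E(d | F_{k-1}) = 0`). -/
def IsDyadicDiff {X : Type*} [NormedAddCommGroup X] (k : ℕ) (d : ℝ → X) : Prop :=
  DyadicMeas k d ∧
    ∀ j : ℕ, 2 * j + 1 < 2 ^ k →
      d ((2 * j : ℝ) / 2 ^ k) = - d ((2 * j + 1 : ℝ) / 2 ^ k)

/-- `T` has strong martingale type `p` with constant `c`. -/
def StrongMartType {X Y : Type*} [NormedAddCommGroup X] [NormedSpace ℝ X]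
    [NormedAddCommGroup Y] [NormedSpace ℝ Y] (T : X →L[ℝ] Y) (p c : ℝ) : Prop :=
  ∀ (n : ℕ) (d : ℕ → ℝ → X), (∀ k, 1 ≤ k → k ≤ n → IsDyadicDiff k (d k)) →
    ∀ y : Y,
      LqNorm p (fun t => y + ∑ k ∈ Finset.Icc 1 n, T (d k t)) ≤
        (‖y‖ ^ p + c ^ p * ∑ k ∈ Finset.Icc 1 n, LqNorm p (d k) ^ p) ^ (1/p)

/-- `T` has strong martingale cotype `q` with constant `c`. -/
def StrongMartCotype {X Y : Type*} [NormedAddCommGroup X] [NormedSpace ℝ X]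
    [NormedAddCommGroup Y] [NormedSpace ℝ Y] (T : X →L[ℝ] Y) (q c : ℝ) : Prop :=
  ∀ (n : ℕ) (x : X) (d : ℕ → ℝ → X), d 0 = (fun _ => x) →
    (∀ k, 1 ≤ k → k ≤ n → IsDyadicDiff k (d k)) →
      (‖x‖ ^ q + c⁻¹ ^ q *
          ∑ k ∈ Finset.Icc 1 n, LqNorm q (fun t => T (d k t)) ^ q) ^ (1/q) ≤
        LqNorm q (fun t => ∑ k ∈ Finset.range (n+1), d k t)

/-- `T` has (ordinary) martingale type `p` with constant `c`. -/
def MartType {X Y : Type*} [NormedAddCommGroup X] [NormedSpace ℝ X]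
    [NormedAddCommGroup Y] [NormedSpace ℝ Y] (T : X →L[ℝ] Y) (p c : ℝ) : Prop :=
  ∀ (n : ℕ) (d : ℕ → ℝ → X), DyadicMeas 0 (d 0) →
    (∀ k, 1 ≤ k → k ≤ n → IsDyadicDiff k (d k)) →
      LqNorm p (fun t => ∑ k ∈ Finset.range (n+1), T (d k t)) ≤
        c * (∑ k ∈ Finset.range (n+1), LqNorm p (d k) ^ p) ^ (1/p)

/-- `T` has (ordinary) martingale cotype `q` with constant `c`. -/
def MartCotype {X Y : Type*} [NormedAddCommGroup X] [NormedSpace ℝ X]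
    [NormedAddCommGroup Y] [NormedSpace ℝ Y] (T : X →L[ℝ] Y) (q c : ℝ) : Prop :=
  ∀ (n : ℕ) (d : ℕ → ℝ → X), DyadicMeas 0 (d 0) →
    (∀ k, 1 ≤ k → k ≤ n → IsDyadicDiff k (d k)) →
      (∑ k ∈ Finset.range (n+1), LqNorm q (fun t => T (d k t)) ^ q) ^ (1/q) ≤
        c * LqNorm q (fun t => ∑ k ∈ Finset.range (n+1), d k t)

/-- `T` is uniformly `q`-convex with constant `c`. -/
def UnifQConvex {X Y : Type*} [NormedAddCommGroup X] [NormedSpace ℝ X]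
    [NormedAddCommGroup Y] [NormedSpace ℝ Y] (T : X →L[ℝ] Y) (q c : ℝ) : Prop :=
  ∀ xp xm : X,
    ‖(2:ℝ)⁻¹ • (T xp - T xm)‖ ≤
      c * ((‖xp‖ ^ q + ‖xm‖ ^ q) / 2 - ‖(2:ℝ)⁻¹ • (xp + xm)‖ ^ q) ^ (1/q)

/-- `T` is uniformly `p`-smooth with constant `c`. -/
def UnifPSmooth {X Y : Type*} [NormedAddCommGroup X] [NormedSpace ℝ X]
    [NormedAddCommGroup Y] [NormedSpace ℝ Y] (T : X →L[ℝ] Y) (p c : ℝ) : Prop :=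
  ∀ (x : X) (y : Y),
    ((‖y + T x‖ ^ p + ‖y - T x‖ ^ p) / 2 - ‖y‖ ^ p) ^ (1/p) ≤ c * ‖x‖

lemma LqNorm_nonneg {X : Type*} [NormedAddCommGroup X] (q : ℝ) (f : ℝ → X) :
    0 ≤ LqNorm q f := by
  apply Real.rpow_nonneg
  apply intervalIntegral.integral_nonneg (by norm_num)
  intro u _
  exact Real.rpow_nonneg (norm_nonneg _) _

lemma LqNorm_const {X : Type*} [NormedAddCommGroup X] {q : ℝ} (hq : q ≠ 0) (y : X) :
    LqNorm q (fun _ => y) = ‖y‖ := by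
  unfold LqNorm
  rw [intervalIntegral.integral_const]
  simp only [sub_zero, one_smul, one_div]
  exact Real.rpow_rpow_inv (norm_nonneg y) hq

theorem stmt_11 {X Y : Type*} [NormedAddCommGroup X] [NormedSpace ℝ X] [CompleteSpace X]
    [NormedAddCommGroup Y] [NormedSpace ℝ Y] [CompleteSpace Y]
    (q c : ℝ) (hq : 2 ≤ q) (hc : 0 < c) (T : X →L[ℝ] Y)
    (hT : MartCotype T q c)
    (K : X → ℝ)
    (hK : ∀ x : X, K x = sInf { r : ℝ | ∃ (n : ℕ) (d : ℕ → ℝ → X),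
      (∀ k, 1 ≤ k → k ≤ n → IsDyadicDiff k (d k)) ∧
      r = (LqNorm q (fun t => x + ∑ k ∈ Finset.Icc 1 n, d k t) ^ q -
            c⁻¹ ^ q * ∑ k ∈ Finset.Icc 1 n, LqNorm q (fun t => T (d k t)) ^ q) ^ (1/q) }) :
    ∀ x : X, c⁻¹ * ‖T x‖ ≤ K x ∧ K x ≤ ‖x‖ := by
  intro x
  have hq0 : (0:ℝ) < q := by linarith
  have hqne : q ≠ 0 := ne_of_gt hq0
  rw [hK x]
  set S := { r : ℝ | ∃ (n : ℕ) (d : ℕ → ℝ → X),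
      (∀ k, 1 ≤ k → k ≤ n → IsDyadicDiff k (d k)) ∧
      r = (LqNorm q (fun t => x + ∑ k ∈ Finset.Icc 1 n, d k t) ^ q -
            c⁻¹ ^ q * ∑ k ∈ Finset.Icc 1 n, LqNorm q (fun t => T (d k t)) ^ q) ^ (1/q) }
    with hS
  have hmem : ‖x‖ ∈ S := by
    refine ⟨0, fun _ _ => 0, fun k hk hk0 => by omega, ?_⟩
    rw [show Finset.Icc 1 0 = (∅ : Finset ℕ) by rfl]
    simp only [Finset.sum_empty, add_zero, mul_zero, sub_zero]
    rw [LqNorm_const hqne x, one_div,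
      Real.rpow_rpow_inv (norm_nonneg x) hqne]
  -- lower bound
  have hlb : ∀ r ∈ S, c⁻¹ * ‖T x‖ ≤ r := by
    rintro r ⟨n, d, hd, rfl⟩
    set d' : ℕ → ℝ → X := fun k => if k = 0 then (fun _ => x) else d k with hd'
    have hT' := hT n d' (by
        intro s t _ _ _
        simp [hd'])
      (by
        intro k hk1 hkn
        have : d' k = d k := by simp [hd', Nat.one_le_iff_ne_zero.mp hk1]
        rw [this]; exact hd k hk1 hkn)
    have hsplit : Finset.range (n+1) = insert 0 (Finset.Icc 1 n) := by
      ext k; simp; omega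
    have h0 : (0:ℕ) ∉ Finset.Icc 1 n := by simp
    rw [hsplit, Finset.sum_insert h0] at hT'
    have hsum1 : ∀ t : ℝ, ∑ k ∈ insert 0 (Finset.Icc 1 n), d' k t
        = x + ∑ k ∈ Finset.Icc 1 n, d k t := by
      intro t
      rw [Finset.sum_insert h0]
      have h1 : d' 0 t = x := by simp [hd']
      rw [h1]
      congr 1
      apply Finset.sum_congr rfl
      intro k hk
      have hk0 : k ≠ 0 := by simp at hk; omega
      simp [hd', hk0]
    have hsum2 : ∑ k ∈ Finset.Icc 1 n, LqNorm q (fun t => T (d' k t)) ^ q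
        = ∑ k ∈ Finset.Icc 1 n, LqNorm q (fun t => T (d k t)) ^ q := by
      apply Finset.sum_congr rfl
      intro k hk
      have : k ≠ 0 := by simp at hk; omega
      simp [hd', this]
    simp only [hsum2] at hT'
    have hL0 : LqNorm q (fun t => ∑ k ∈ insert 0 (Finset.Icc 1 n), d' k t)
        = LqNorm q (fun t => x + ∑ k ∈ Finset.Icc 1 n, d k t) := by
      congr 1; funext t; exact hsum1 t
    rw [hL0] at hT'
    have hd'0 : LqNorm q (fun t => T (d' 0 t)) = ‖T x‖ := by
      simp only [hd', if_pos rfl]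
      exact LqNorm_const hqne (T x)
    rw [hd'0] at hT'
    set L := LqNorm q (fun t => x + ∑ k ∈ Finset.Icc 1 n, d k t) with hLdef
    set Ssum := ∑ k ∈ Finset.Icc 1 n, LqNorm q (fun t => T (d k t)) ^ q with hSsum
    have hSsum0 : 0 ≤ Ssum := by
      apply Finset.sum_nonneg
      intro k _
      exact Real.rpow_nonneg (LqNorm_nonneg _ _) _
    have hA0 : 0 ≤ ‖T x‖ ^ q := Real.rpow_nonneg (norm_nonneg _) _
    have hL0' : 0 ≤ L := LqNorm_nonneg _ _
    -- raise hT' to the power q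
    have hpow : ‖T x‖ ^ q + Ssum ≤ c ^ q * L ^ q := by
      have h1 := Real.rpow_le_rpow (Real.rpow_nonneg (by linarith) _) hT' hq0.le
      rwa [one_div, Real.rpow_inv_rpow (by linarith) hqne,
        Real.mul_rpow hc.le hL0'] at h1
    have hkey : c⁻¹ ^ q * ‖T x‖ ^ q ≤ L ^ q - c⁻¹ ^ q * Ssum := by
      have hi : c⁻¹ ^ q * c ^ q = 1 := by
        rw [← Real.mul_rpow (inv_nonneg.mpr hc.le) hc.le, inv_mul_cancel₀ hc.ne',
          Real.one_rpow]
      have hmul := mul_le_mul_of_nonneg_left hpow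
        (Real.rpow_nonneg (inv_nonneg.mpr hc.le) q)
      rw [mul_add, ← mul_assoc, hi, one_mul] at hmul
      linarith
    calc c⁻¹ * ‖T x‖ = (c⁻¹ ^ q * ‖T x‖ ^ q) ^ (1/q) := by
          rw [Real.mul_rpow (Real.rpow_nonneg (inv_nonneg.mpr hc.le) _) hA0,
            one_div, Real.rpow_rpow_inv (inv_nonneg.mpr hc.le) hqne,
            Real.rpow_rpow_inv (norm_nonneg _) hqne]
      _ ≤ (L ^ q - c⁻¹ ^ q * Ssum) ^ (1/q) := by
          apply Real.rpow_le_rpow (by positivity) hkey (by positivity)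
  have hbdd : BddBelow S := ⟨c⁻¹ * ‖T x‖, hlb⟩
  exact ⟨le_csInf ⟨‖x‖, hmem⟩ hlb, csInf_le hbdd hmem⟩
end

section
/- Let 2 ≤ q < ∞ and let T : X → Y have martingale cotype q with constant c. Define {x} as the infimum of (‖x + Σ_{k=1}^n d_k‖_{L_q}^q − c^{−q} Σ_{k=1}^n ‖Td_k‖_{L_q}^q)^{1/q} over all X-valued dyadic martingale difference sequences. Then for all x₊, x₋ ∈ X: {(x₊+x₋)/2}^q ≤ ({x₊}^q + {x₋}^q)/2 − c^{−q} ‖(Tx₊ − Tx₋)/2‖^q. -/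
open MeasureTheory Finset

lemma floorDivNat (x : ℝ) (n : ℕ) (hn : 0 < n) : ⌊x / (n:ℝ)⌋ = ⌊x⌋ / (n:ℤ) := by
  have hnz : ((n:ℤ)) ≠ 0 := by exact_mod_cast hn.ne'
  have hn' : (0:ℝ) < (n:ℝ) := by exact_mod_cast hn
  have hmod := Int.emod_add_mul_ediv ⌊x⌋ (n:ℤ)
  have h0 : 0 ≤ ⌊x⌋ % (n:ℤ) := Int.emod_nonneg _ hnz
  have h1 : ⌊x⌋ % (n:ℤ) < (n:ℤ) := Int.emod_lt_of_pos _ (by exact_mod_cast hn)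
  have hfl := Int.floor_le x
  have hfu := Int.lt_floor_add_one x
  have hmodR : ((⌊x⌋ % (n:ℤ) : ℤ):ℝ) + (n:ℝ) * ((⌊x⌋ / (n:ℤ) : ℤ):ℝ) = ((⌊x⌋:ℤ):ℝ) := by
    exact_mod_cast hmod
  have h0R : (0:ℝ) ≤ ((⌊x⌋ % (n:ℤ) : ℤ):ℝ) := by exact_mod_cast h0
  have h1R : ((⌊x⌋ % (n:ℤ) : ℤ):ℝ) < (n:ℝ) := by exact_mod_cast h1
  rw [Int.floor_eq_iff]
  constructor
  · rw [le_div_iff₀ hn']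
    nlinarith
  · have h1R' : ((⌊x⌋ % (n:ℤ) : ℤ):ℝ) + 1 ≤ (n:ℝ) := by exact_mod_cast Int.add_one_le_iff.mpr h1
    rw [div_lt_iff₀ hn']
    push_cast
    nlinarith

lemma dyadicMeas_mono {X : Type*} {f : ℝ → X} {j m : ℕ} (h : j ≤ m) (hf : DyadicMeas j f) :
    DyadicMeas m f := by
  intro s t hs ht hst
  apply hf s t hs ht
  have key : ∀ u : ℝ, ⌊u * 2 ^ j⌋ = ⌊u * 2 ^ m⌋ / ((2 ^ (m - j) : ℕ) : ℤ) := by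
    intro u
    have he : u * 2 ^ j = u * 2 ^ m / ((2 ^ (m - j) : ℕ) : ℝ) := by
      rw [eq_div_iff (by positivity)]
      push_cast
      rw [mul_assoc, ← pow_add]
      congr 2
      omega
    rw [he, floorDivNat _ _ (by positivity)]
  rw [key s, key t, hst]

lemma dyadic_floor_eq {m i : ℕ} (hi : i < 2 ^ m) {t : ℝ}
    (ht : t ∈ Set.Ico ((i:ℝ)/2^m) (((i:ℝ)+1)/2^m)) : ⌊t * 2 ^ m⌋ = (i:ℤ) := by
  have h2 : (0:ℝ) < 2 ^ m := by positivity
  have h1 : (i:ℝ) ≤ t * 2 ^ m := (div_le_iff₀ h2).mp ht.1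
  have h2' : t * 2 ^ m < (i:ℝ) + 1 := (lt_div_iff₀ h2).mp ht.2
  rw [Int.floor_eq_iff]
  constructor
  · exact_mod_cast h1
  · push_cast; exact h2'

lemma integral_dyadic {m : ℕ} {f : ℝ → ℝ} (hf : DyadicMeas m f) :
    ∫ t in (0:ℝ)..1, f t = (2 ^ m : ℝ)⁻¹ * ∑ i ∈ range (2 ^ m), f ((i:ℝ) / 2 ^ m) := by
  set a : ℕ → ℝ := fun i => (i:ℝ) / 2 ^ m with ha
  have h2 : (0:ℝ) < 2 ^ m := by positivity
  have hconst : ∀ i : ℕ, i < 2 ^ m → ∀ t ∈ Set.Ico (a i) (a (i+1)), f t = f (a i) := by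
    intro i hi t ht
    have hnext : a (i+1) = ((i:ℝ)+1)/2^m := by simp only [ha]; push_cast; ring
    have ht' : t ∈ Set.Ico ((i:ℝ)/2^m) (((i:ℝ)+1)/2^m) := by rw [← hnext]; exact ht
    have hfl : ⌊t * 2^m⌋ = (i:ℤ) := dyadic_floor_eq hi ht'
    have hai : (a i) ∈ Set.Ico ((i:ℝ)/2^m) (((i:ℝ)+1)/2^m) := by
      constructor
      · exact le_refl _
      · rw [div_lt_div_iff₀ h2 h2]; nlinarith
    have hfl2 : ⌊(a i) * 2^m⌋ = (i:ℤ) := dyadic_floor_eq hi hai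
    have hi1 : ((i:ℝ)+1)/2^m ≤ 1 := by
      rw [div_le_one h2]; push_cast
      have : (i:ℝ) + 1 ≤ ((2^m : ℕ) : ℝ) := by exact_mod_cast hi
      simpa using this
    apply hf t (a i)
    · exact ⟨le_trans (by positivity) ht'.1, lt_of_lt_of_le ht'.2 hi1⟩
    · exact ⟨by positivity, lt_of_lt_of_le hai.2 hi1⟩
    · rw [hfl, hfl2]
  have hint : ∀ i : ℕ, i < 2^m →
      (∫ t in a i..a (i+1), f t) = (2^m:ℝ)⁻¹ * f (a i) ∧
        IntervalIntegrable f volume (a i) (a (i+1)) := by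
    intro i hi
    have hle : a i ≤ a (i+1) := by
      simp only [ha]
      gcongr
      push_cast; linarith
    have h1 : ∀ᵐ t : ℝ ∂(volume : Measure ℝ), t ≠ a (i+1) := by
      rw [ae_iff]
      have he : {t : ℝ | ¬ t ≠ a (i+1)} = {a (i+1)} := by ext u; simp
      rw [he]
      exact Real.volume_singleton
    have hae : ∀ᵐ t ∂(volume : Measure ℝ), t ∈ Set.uIoc (a i) (a (i+1)) → f t = f (a i) := by
      filter_upwards [h1] with t ht htm
      rw [Set.uIoc_of_le hle] at htm
      exact hconst i hi t ⟨htm.1.le, lt_of_le_of_ne htm.2 ht⟩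
    have hintg : IntervalIntegrable f volume (a i) (a (i+1)) := by
      rw [intervalIntegrable_iff]
      have hc' : IntegrableOn (fun _ : ℝ => f (a i)) (Set.uIoc (a i) (a (i+1))) volume := by
        apply (integrableOn_const_iff).mpr
        right
        rw [Set.uIoc_of_le hle]
        exact measure_Ioc_lt_top
      apply hc'.congr
      have := (ae_restrict_iff' measurableSet_uIoc).mpr hae
      filter_upwards [this] with t ht
      exact ht.symm
    refine ⟨?_, hintg⟩
    rw [intervalIntegral.integral_congr_ae hae, intervalIntegral.integral_const]
    have hd : a (i+1) - a i = (2^m:ℝ)⁻¹ := by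
      simp only [ha]
      push_cast
      field_simp
      ring
    rw [hd, smul_eq_mul]
  have hsum := intervalIntegral.sum_integral_adjacent_intervals
    (a := a) (n := 2^m) (μ := volume) (f := f) (fun k hk => (hint k hk).2)
  have ha0 : a 0 = 0 := by simp [ha]
  have han : a (2^m) = 1 := by
    simp only [ha]
    push_cast
    field_simp
  rw [← ha0, ← han, ← hsum]
  rw [Finset.mul_sum]
  exact Finset.sum_congr rfl fun i hi => (hint i (mem_range.mp hi)).1

noncomputable def glue {X : Type*} (f g : ℝ → X) : ℝ → X := fun t =>
  if t < 1/2 then f (2*t) else g (2*t - 1)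

lemma glue_pos {X : Type*} {f g : ℝ → X} {t : ℝ} (h : t < 1/2) : glue f g t = f (2*t) :=
  if_pos h

lemma glue_neg {X : Type*} {f g : ℝ → X} {t : ℝ} (h : ¬ t < 1/2) : glue f g t = g (2*t - 1) :=
  if_neg h

lemma glue_comp {Z W : Type*} (F : Z → W) (f g : ℝ → Z) (t : ℝ) :
    F (glue f g t) = glue (fun u => F (f u)) (fun u => F (g u)) t := by
  by_cases h : t < 1/2
  · rw [glue_pos h, glue_pos h]
  · rw [glue_neg h, glue_neg h]

lemma glue_sum {Z : Type*} [AddCommMonoid Z] {ι : Type*} (s : Finset ι) (f g : ι → ℝ → Z) (t : ℝ) :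
    ∑ i ∈ s, glue (f i) (g i) t = glue (fun u => ∑ i ∈ s, f i u) (fun u => ∑ i ∈ s, g i u) t := by
  by_cases h : t < 1/2
  · simp only [glue_pos h]
  · simp only [glue_neg h]

lemma half_iff_floor {m : ℕ} {u : ℝ} (hu : u ∈ Set.Ico (0:ℝ) 1) :
    u < 1/2 ↔ ⌊u * 2 ^ (m+1)⌋ < ((2^m : ℕ) : ℤ) := by
  have h2 : (0:ℝ) < 2 ^ m := by positivity
  rw [Int.floor_lt]
  push_cast
  rw [pow_succ]
  constructor
  · intro h; nlinarith
  · intro h; nlinarith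

lemma dyadicMeas_glue {X : Type*} {f g : ℝ → X} {m : ℕ}
    (hf : DyadicMeas m f) (hg : DyadicMeas m g) : DyadicMeas (m+1) (glue f g) := by
  intro s t hs ht hst
  have hkey : ∀ u : ℝ, 2*u*2^m = u*2^(m+1) := by intro u; rw [pow_succ]; ring
  by_cases hc : s < 1/2
  · have ht2 : t < 1/2 := by
      rw [half_iff_floor ht, ← hst, ← half_iff_floor hs]; exact hc
    rw [glue_pos hc, glue_pos ht2]
    apply hf _ _ ⟨by linarith [hs.1], by linarith⟩ ⟨by linarith [ht.1], by linarith⟩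
    rw [hkey s, hkey t, hst]
  · have ht2 : ¬ t < 1/2 := by
      rw [half_iff_floor ht, ← hst, ← half_iff_floor hs]; exact hc
    push_neg at hc ht2
    rw [glue_neg (not_lt.mpr hc), glue_neg (not_lt.mpr ht2)]
    apply hg _ _ ⟨by linarith, by linarith [hs.2]⟩ ⟨by linarith, by linarith [ht.2]⟩
    have hkey2 : ∀ u : ℝ, (2*u-1)*2^m = u*2^(m+1) - ((2^m : ℕ):ℤ) := by
      intro u; push_cast; rw [pow_succ]; ring
    rw [hkey2 s, hkey2 t, Int.floor_sub_intCast, Int.floor_sub_intCast, hst]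

section Diff
variable {X : Type*} [NormedAddCommGroup X]

lemma isDyadicDiff_zero (k : ℕ) : IsDyadicDiff k (fun _ : ℝ => (0:X)) :=
  ⟨fun _ _ _ _ _ => rfl, fun _ _ => neg_zero.symm⟩

lemma isDyadicDiff_glue {f g : ℝ → X} {k : ℕ} (hk : 1 ≤ k)
    (hf : IsDyadicDiff k f) (hg : IsDyadicDiff k g) : IsDyadicDiff (k+1) (glue f g) := by
  refine ⟨dyadicMeas_glue hf.1 hg.1, ?_⟩
  intro j hj
  have h2 : (0:ℝ) < 2 ^ k := by positivity
  have h2' : (0:ℝ) < 2 ^ (k+1) := by positivity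
  have hps : (2:ℝ) ^ (k+1) = 2 ^ k * 2 := by rw [pow_succ]
  by_cases hc : 2*j+1 < 2^k
  · have hcR : 2*(j:ℝ)+1 < 2^k := by exact_mod_cast hc
    have hp1 : (2*(j:ℝ)+1)/2^(k+1) < 1/2 := by
      rw [div_lt_iff₀ h2', hps]; nlinarith
    have hp0 : (2*(j:ℝ))/2^(k+1) < 1/2 := by
      rw [div_lt_iff₀ h2', hps]; nlinarith
    rw [glue_pos hp0, glue_pos hp1]
    have e0 : 2*((2*(j:ℝ))/2^(k+1)) = (2*(j:ℝ))/2^k := by rw [hps]; ring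
    have e1 : 2*((2*(j:ℝ)+1)/2^(k+1)) = (2*(j:ℝ)+1)/2^k := by rw [hps]; ring
    rw [e0, e1]
    exact hf.2 j hc
  · have hkk : 2^k = 2*2^(k-1) := by
      rw [← pow_succ']
      congr 1
      omega
    have hjge : 2^(k-1) ≤ j := by omega
    set j' := j - 2^(k-1) with hj'
    have hjj : j = 2^(k-1) + j' := by omega
    have hss : 2^(k+1) = 2*2^k := by rw [pow_succ']
    have hj'lt : 2*j'+1 < 2^k := by omega
    have hcastj : (j:ℝ) = 2^(k-1) + (j':ℝ) := by exact_mod_cast congrArg (Nat.cast : ℕ → ℝ) hjj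
    have hkkR : (2:ℝ)^k = 2*2^(k-1) := by exact_mod_cast congrArg (Nat.cast : ℕ → ℝ) hkk
    have hp0 : ¬ ((2*(j:ℝ))/2^(k+1) < 1/2) := by
      rw [not_lt, le_div_iff₀ h2', hps, hcastj, hkkR]; nlinarith
    have hp1 : ¬ ((2*(j:ℝ)+1)/2^(k+1) < 1/2) := by
      rw [not_lt, le_div_iff₀ h2', hps, hcastj, hkkR]; nlinarith
    rw [glue_neg hp0, glue_neg hp1]
    have e0 : 2*((2*(j:ℝ))/2^(k+1)) - 1 = (2*(j':ℝ))/2^k := by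
      rw [hps, hcastj, hkkR]; field_simp; ring
    have e1 : 2*((2*(j:ℝ)+1)/2^(k+1)) - 1 = (2*(j':ℝ)+1)/2^k := by
      rw [hps, hcastj, hkkR]; field_simp; ring
    rw [e0, e1]
    exact hg.2 j' hj'lt

lemma isDyadicDiff_glue_const (v : X) :
    IsDyadicDiff 1 (glue (fun _ => v) (fun _ => -v)) := by
  constructor
  · intro s t hs ht hst
    have hiff : s < 1/2 ↔ t < 1/2 := by
      rw [half_iff_floor (m := 0) hs, half_iff_floor (m := 0) ht, hst]
    by_cases h : s < 1/2
    · rw [glue_pos h, glue_pos (hiff.mp h)]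
    · rw [glue_neg h, glue_neg (fun h' => h (hiff.mpr h'))]
  · intro j hj
    have hj0 : j = 0 := by omega
    subst hj0
    norm_num [glue]

end Diff

lemma integral_glue {m : ℕ} {F G : ℝ → ℝ} (hF : DyadicMeas m F) (hG : DyadicMeas m G) :
    ∫ t in (0:ℝ)..1, glue F G t
      = ((∫ t in (0:ℝ)..1, F t) + ∫ t in (0:ℝ)..1, G t) / 2 := by
  rw [integral_dyadic (dyadicMeas_glue hF hG), integral_dyadic hF, integral_dyadic hG]
  have h2 : (0:ℝ) < 2^m := by positivity
  have h21 : 2^(m+1) = 2^m + 2^m := by rw [pow_succ]; omega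
  have hsplit : ∑ i ∈ range (2^(m+1)), glue F G ((i:ℝ)/2^(m+1))
      = ∑ i ∈ range (2^m), F ((i:ℝ)/2^m) + ∑ i ∈ range (2^m), G ((i:ℝ)/2^m) := by
    rw [h21, Finset.sum_range_add]
    congr 1
    · apply Finset.sum_congr rfl
      intro i hi
      have hi' : (i:ℝ) < 2^m := by exact_mod_cast mem_range.mp hi
      have hlt : (i:ℝ)/2^(m+1) < 1/2 := by
        rw [div_lt_iff₀ (by positivity), pow_succ]; nlinarith
      rw [glue_pos hlt]
      congr 1
      rw [pow_succ]; ring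
    · apply Finset.sum_congr rfl
      intro i hi
      have hge : ¬ (((2^m + i : ℕ):ℝ)/2^(m+1) < 1/2) := by
        rw [not_lt, le_div_iff₀ (by positivity), pow_succ]
        push_cast
        nlinarith [Nat.cast_nonneg (α := ℝ) i]
      rw [glue_neg hge]
      congr 1
      push_cast
      rw [pow_succ]
      field_simp
      ring
  rw [hsplit, pow_succ, mul_inv]
  ring

section Lq
variable {X Y : Type*} [NormedAddCommGroup X] [NormedSpace ℝ X]
  [NormedAddCommGroup Y] [NormedSpace ℝ Y]

lemma lq_integral_nonneg (q : ℝ) (f : ℝ → X) : 0 ≤ ∫ t in (0:ℝ)..1, ‖f t‖ ^ q :=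
  intervalIntegral.integral_nonneg zero_le_one (fun _ _ => Real.rpow_nonneg (norm_nonneg _) q)

lemma lqNorm_nonneg (q : ℝ) (f : ℝ → X) : 0 ≤ LqNorm q f :=
  Real.rpow_nonneg (lq_integral_nonneg q f) _

lemma lqNorm_rpow {q : ℝ} (hq : q ≠ 0) (f : ℝ → X) :
    LqNorm q f ^ q = ∫ t in (0:ℝ)..1, ‖f t‖ ^ q := by
  rw [LqNorm, one_div, Real.rpow_inv_rpow (lq_integral_nonneg q f) hq]

lemma lqNorm_const {q : ℝ} (hq : q ≠ 0) (x : X) : LqNorm q (fun _ => x) = ‖x‖ := by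
  rw [LqNorm, intervalIntegral.integral_const]
  simp only [sub_zero, one_smul]
  rw [one_div, Real.rpow_rpow_inv (norm_nonneg x) hq]

lemma sum_Icc_one {Z : Type*} [AddCommMonoid Z] (n : ℕ) (f : ℕ → Z) :
    ∑ k ∈ Finset.Icc 1 n, f k = ∑ i ∈ range n, f (i+1) := by
  induction n with
  | zero => simp
  | succ n ih => rw [Finset.sum_Icc_succ_top (by omega), ih, Finset.sum_range_succ]

end Lq

section Inner
variable {X Y : Type*} [NormedAddCommGroup X] [NormedSpace ℝ X]
  [NormedAddCommGroup Y] [NormedSpace ℝ Y]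

lemma inner_nonneg' {q c : ℝ} (hq0 : 0 < q) (hc : 0 < c) {T : X →L[ℝ] Y}
    (hT : MartCotype T q c) (x : X) (n : ℕ) (d : ℕ → ℝ → X)
    (hd : ∀ k, 1 ≤ k → k ≤ n → IsDyadicDiff k (d k)) :
    c⁻¹ ^ q * ∑ k ∈ Finset.Icc 1 n, LqNorm q (fun t => T (d k t)) ^ q
      ≤ LqNorm q (fun t => x + ∑ k ∈ Finset.Icc 1 n, d k t) ^ q := by
  set d' : ℕ → ℝ → X := fun k => if k = 0 then (fun _ => x) else d k with hd'
  have h0 : DyadicMeas 0 (d' 0) := by intro s t _ _ _; simp [hd']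
  have hdk : ∀ k, 1 ≤ k → k ≤ n → IsDyadicDiff k (d' k) := by
    intro k h1 h2
    simp only [hd', if_neg (by omega : ¬ k = 0)]
    exact hd k h1 h2
  have key := hT n d' h0 hdk
  have hsum : (fun t => ∑ k ∈ Finset.range (n+1), d' k t)
      = fun t => x + ∑ k ∈ Finset.Icc 1 n, d k t := by
    funext t
    rw [Finset.sum_range_succ', sum_Icc_one]
    simp only [hd', if_neg (Nat.succ_ne_zero _), if_pos rfl]
    rw [add_comm]
  rw [hsum] at key
  set L := LqNorm q (fun t => x + ∑ k ∈ Finset.Icc 1 n, d k t) with hL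
  set A := ∑ k ∈ Finset.range (n+1), LqNorm q (fun t => T (d' k t)) ^ q with hA
  have hAsplit : A = LqNorm q (fun t => T (d' 0 t)) ^ q
      + ∑ k ∈ Finset.Icc 1 n, LqNorm q (fun t => T (d k t)) ^ q := by
    rw [hA, Finset.sum_range_succ', sum_Icc_one, add_comm]
    congr 1
  have hA0 : 0 ≤ A := by
    rw [hA]
    exact Finset.sum_nonneg fun k _ => Real.rpow_nonneg (lqNorm_nonneg _ _) _
  have hAle : A ≤ (c * L) ^ q := by
    calc A = (A ^ (1/q)) ^ q := by
          rw [one_div, Real.rpow_inv_rpow hA0 hq0.ne']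
      _ ≤ (c * L) ^ q :=
          Real.rpow_le_rpow (Real.rpow_nonneg hA0 _) key hq0.le
  have hcL : (c * L) ^ q = c ^ q * L ^ q :=
    Real.mul_rpow hc.le (lqNorm_nonneg _ _)
  have hterm0 : 0 ≤ LqNorm q (fun t => T (d' 0 t)) ^ q :=
    Real.rpow_nonneg (lqNorm_nonneg _ _) _
  have hcq : (0:ℝ) < c ^ q := Real.rpow_pos_of_pos hc _
  have hinv : c⁻¹ ^ q = (c ^ q)⁻¹ := Real.inv_rpow hc.le q
  have hS : ∑ k ∈ Finset.Icc 1 n, LqNorm q (fun t => T (d k t)) ^ q ≤ c ^ q * L ^ q := by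
    rw [← hcL]
    calc ∑ k ∈ Finset.Icc 1 n, LqNorm q (fun t => T (d k t)) ^ q ≤ A := by
          rw [hAsplit]; linarith
      _ ≤ (c * L) ^ q := hAle
  rw [hinv]
  rw [inv_mul_le_iff₀ hcq]
  exact hS

def innerSet {X Y : Type*} [NormedAddCommGroup X] [NormedSpace ℝ X]
    [NormedAddCommGroup Y] [NormedSpace ℝ Y] (q c : ℝ) (T : X →L[ℝ] Y) (x : X) : Set ℝ :=
  { a | ∃ (n : ℕ) (d : ℕ → ℝ → X),
      (∀ k, 1 ≤ k → k ≤ n → IsDyadicDiff k (d k)) ∧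
      a = LqNorm q (fun t => x + ∑ k ∈ Finset.Icc 1 n, d k t) ^ q -
            c⁻¹ ^ q * ∑ k ∈ Finset.Icc 1 n, LqNorm q (fun t => T (d k t)) ^ q }

lemma innerSet_nonneg {q c : ℝ} (hq0 : 0 < q) (hc : 0 < c) {T : X →L[ℝ] Y}
    (hT : MartCotype T q c) {x : X} {a : ℝ} (ha : a ∈ innerSet q c T x) : 0 ≤ a := by
  obtain ⟨n, d, hd, rfl⟩ := ha
  have := inner_nonneg' hq0 hc hT x n d hd
  linarith

lemma innerSet_nonempty {q c : ℝ} (T : X →L[ℝ] Y) (x : X) :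
    (innerSet q c T x).Nonempty :=
  ⟨_, 0, fun _ _ => 0, fun k h1 h2 => absurd (h1.trans h2) (by omega), rfl⟩

lemma innerSet_bddBelow {q c : ℝ} (hq0 : 0 < q) (hc : 0 < c) {T : X →L[ℝ] Y}
    (hT : MartCotype T q c) (x : X) : BddBelow (innerSet q c T x) :=
  ⟨0, fun _ ha => innerSet_nonneg hq0 hc hT ha⟩

end Inner

lemma dyadicMeas_comp {Z W : Type*} {m : ℕ} {f : ℝ → Z} (F : Z → W) (hf : DyadicMeas m f) :
    DyadicMeas m (fun t => F (f t)) := fun s t hs ht h => congrArg F (hf s t hs ht h)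

lemma pad_sum {Z : Type*} [AddCommMonoid Z] {n m : ℕ} (hnm : n ≤ m) (G : ℕ → Z)
    (hG : ∀ k, n < k → G k = 0) :
    ∑ k ∈ Finset.Icc 1 m, G k = ∑ k ∈ Finset.Icc 1 n, G k := by
  refine (Finset.sum_subset (Finset.Icc_subset_Icc_right hnm) ?_).symm
  intro k hk hk2
  refine hG k ?_
  have h1 := Finset.mem_Icc.mp hk
  by_contra h
  exact hk2 (Finset.mem_Icc.mpr ⟨h1.1, by omega⟩)

section Glued
variable {X Y : Type*} [NormedAddCommGroup X] [NormedSpace ℝ X]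
  [NormedAddCommGroup Y] [NormedSpace ℝ Y]

lemma dyadicMeas_base {x : X} {n m : ℕ} (hnm : n ≤ m) {d : ℕ → ℝ → X}
    (hd : ∀ k, 1 ≤ k → k ≤ n → IsDyadicDiff k (d k)) :
    DyadicMeas m (fun s => x + ∑ k ∈ Finset.Icc 1 n, d k s) := by
  intro s t hs ht hst
  simp only
  congr 1
  refine Finset.sum_congr rfl fun k hk => ?_
  have h1 := Finset.mem_Icc.mp hk
  exact dyadicMeas_mono (h1.2.trans hnm) (hd k h1.1 h1.2).1 s t hs ht hst

lemma glued_step {q c : ℝ} (hq0 : 0 < q) (hc : 0 < c) (T : X →L[ℝ] Y)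
    (xp xm : X) {a b : ℝ} (ha : a ∈ innerSet q c T xp) (hb : b ∈ innerSet q c T xm) :
    ((a + b)/2 - c⁻¹ ^ q * ‖(2:ℝ)⁻¹ • (T xp - T xm)‖ ^ q)
      ∈ innerSet q c T ((2:ℝ)⁻¹ • (xp + xm)) := by
  obtain ⟨np, dp, hdp, hav⟩ := ha
  obtain ⟨nm, dm, hdm, hbv⟩ := hb
  set m := max np nm with hm
  set v := (2:ℝ)⁻¹ • (xp - xm) with hv
  set Dp : ℕ → ℝ → X := fun k => if k ≤ np then dp k else fun _ => (0:X) with hDpdef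
  set Dm : ℕ → ℝ → X := fun k => if k ≤ nm then dm k else fun _ => (0:X) with hDmdef
  have hDp : ∀ k, 1 ≤ k → k ≤ m → IsDyadicDiff k (Dp k) := by
    intro k h1 _
    by_cases h : k ≤ np
    · simp only [hDpdef, if_pos h]; exact hdp k h1 h
    · simp only [hDpdef, if_neg h]; exact isDyadicDiff_zero k
  have hDm : ∀ k, 1 ≤ k → k ≤ m → IsDyadicDiff k (Dm k) := by
    intro k h1 _
    by_cases h : k ≤ nm
    · simp only [hDmdef, if_pos h]; exact hdm k h1 h
    · simp only [hDmdef, if_neg h]; exact isDyadicDiff_zero k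
  set e : ℕ → ℝ → X := fun k =>
    if k = 1 then glue (fun _ => v) (fun _ => -v) else glue (Dp (k-1)) (Dm (k-1)) with hedef
  have he : ∀ k, 1 ≤ k → k ≤ m+1 → IsDyadicDiff k (e k) := by
    intro k h1 h2
    by_cases hk1 : k = 1
    · subst hk1
      simp only [hedef, if_pos rfl]
      exact isDyadicDiff_glue_const v
    · obtain ⟨j, rfl⟩ : ∃ j, k = j + 1 := ⟨k-1, by omega⟩
      simp only [hedef, if_neg hk1, Nat.add_sub_cancel]
      exact isDyadicDiff_glue (by omega) (hDp j (by omega) (by omega))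
        (hDm j (by omega) (by omega))
  refine ⟨m+1, e, he, ?_⟩
  have hsum_e : ∀ t : ℝ, ∑ k ∈ Finset.Icc 1 (m+1), e k t
      = glue (fun _ => v) (fun _ => -v) t + ∑ i ∈ range m, glue (Dp (i+1)) (Dm (i+1)) t := by
    intro t
    rw [sum_Icc_one, Finset.sum_range_succ', add_comm]
    congr 1
  have hptDp : ∀ s : ℝ, ∑ i ∈ range m, Dp (i+1) s = ∑ k ∈ Finset.Icc 1 np, dp k s := by
    intro s
    have h0 : ∑ i ∈ range m, Dp (i+1) s = ∑ k ∈ Finset.Icc 1 m, Dp k s :=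
      (sum_Icc_one m (fun k => Dp k s)).symm
    rw [h0, pad_sum (le_max_left np nm) _ (fun k hk => by
      simp only [hDpdef, if_neg (by omega : ¬ k ≤ np)])]
    refine Finset.sum_congr rfl fun k hk => ?_
    simp only [hDpdef, if_pos (Finset.mem_Icc.mp hk).2]
  have hptDm : ∀ s : ℝ, ∑ i ∈ range m, Dm (i+1) s = ∑ k ∈ Finset.Icc 1 nm, dm k s := by
    intro s
    have h0 : ∑ i ∈ range m, Dm (i+1) s = ∑ k ∈ Finset.Icc 1 m, Dm k s :=
      (sum_Icc_one m (fun k => Dm k s)).symm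
    rw [h0, pad_sum (le_max_right np nm) _ (fun k hk => by
      simp only [hDmdef, if_neg (by omega : ¬ k ≤ nm)])]
    refine Finset.sum_congr rfl fun k hk => ?_
    simp only [hDmdef, if_pos (Finset.mem_Icc.mp hk).2]
  have hmidp : (2:ℝ)⁻¹ • (xp + xm) + v = xp := by
    rw [hv, ← smul_add]
    have h1 : xp + xm + (xp - xm) = (2:ℝ) • xp := by
      rw [two_smul]; abel
    rw [h1, smul_smul]
    norm_num
  have hmidm : (2:ℝ)⁻¹ • (xp + xm) + -v = xm := by
    rw [hv, ← smul_neg, ← smul_add]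
    have h1 : xp + xm + -(xp - xm) = (2:ℝ) • xm := by
      rw [two_smul]; abel
    rw [h1, smul_smul]
    norm_num
  have hpt : (fun t => (2:ℝ)⁻¹ • (xp + xm) + ∑ k ∈ Finset.Icc 1 (m+1), e k t)
      = glue (fun s => xp + ∑ k ∈ Finset.Icc 1 np, dp k s)
             (fun s => xm + ∑ k ∈ Finset.Icc 1 nm, dm k s) := by
    funext t
    rw [hsum_e t, glue_sum]
    by_cases h : t < 1/2
    · rw [glue_pos h, glue_pos h, glue_pos h, ← add_assoc, hmidp, hptDp]
    · rw [glue_neg h, glue_neg h, glue_neg h, ← add_assoc, hmidm, hptDm]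
  have hmeasP : DyadicMeas m (fun u => ‖xp + ∑ k ∈ Finset.Icc 1 np, dp k u‖ ^ q) :=
    dyadicMeas_comp (fun z : X => ‖z‖ ^ q) (dyadicMeas_base (le_max_left np nm) hdp)
  have hmeasM : DyadicMeas m (fun u => ‖xm + ∑ k ∈ Finset.Icc 1 nm, dm k u‖ ^ q) :=
    dyadicMeas_comp (fun z : X => ‖z‖ ^ q) (dyadicMeas_base (le_max_right np nm) hdm)
  have hLq1 : LqNorm q (fun t => (2:ℝ)⁻¹ • (xp + xm) + ∑ k ∈ Finset.Icc 1 (m+1), e k t) ^ q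
      = ((LqNorm q (fun t => xp + ∑ k ∈ Finset.Icc 1 np, dp k t) ^ q)
         + LqNorm q (fun t => xm + ∑ k ∈ Finset.Icc 1 nm, dm k t) ^ q) / 2 := by
    rw [hpt, lqNorm_rpow hq0.ne', lqNorm_rpow hq0.ne', lqNorm_rpow hq0.ne']
    have hcomp : (fun t => ‖glue (fun s => xp + ∑ k ∈ Finset.Icc 1 np, dp k s)
          (fun s => xm + ∑ k ∈ Finset.Icc 1 nm, dm k s) t‖ ^ q)
        = glue (fun u => ‖xp + ∑ k ∈ Finset.Icc 1 np, dp k u‖ ^ q)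
               (fun u => ‖xm + ∑ k ∈ Finset.Icc 1 nm, dm k u‖ ^ q) := by
      funext t
      by_cases h : t < 1/2
      · rw [glue_pos h, glue_pos h]
      · rw [glue_neg h, glue_neg h]
    rw [hcomp]
    exact integral_glue hmeasP hmeasM
  have hTv : T v = (2:ℝ)⁻¹ • (T xp - T xm) := by
    rw [hv, _root_.map_smul, map_sub]
  have hTsum : ∑ k ∈ Finset.Icc 1 (m+1), LqNorm q (fun t => T (e k t)) ^ q
      = ‖(2:ℝ)⁻¹ • (T xp - T xm)‖ ^ q
        + ((∑ k ∈ Finset.Icc 1 np, LqNorm q (fun t => T (dp k t)) ^ q)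
           + ∑ k ∈ Finset.Icc 1 nm, LqNorm q (fun t => T (dm k t)) ^ q) / 2 := by
    rw [sum_Icc_one, Finset.sum_range_succ', add_comm]
    congr 1
    · -- first term
      have h1 : (fun t => ‖T (e (0+1) t)‖ ^ q) = fun _ : ℝ => ‖T v‖ ^ q := by
        funext t
        show ‖T (e 1 t)‖ ^ q = _
        simp only [hedef, if_pos rfl]
        by_cases h : t < 1/2
        · rw [glue_pos h]
        · rw [glue_neg h, map_neg, norm_neg]
      rw [lqNorm_rpow hq0.ne', h1, intervalIntegral.integral_const, hTv]
      simp
    · have hterm : ∀ i ∈ range m, LqNorm q (fun t => T (e (i+1+1) t)) ^ q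
          = (LqNorm q (fun t => T (Dp (i+1) t)) ^ q
             + LqNorm q (fun t => T (Dm (i+1) t)) ^ q) / 2 := by
        intro i hi
        have him : i + 1 ≤ m := by have := mem_range.mp hi; omega
        have heq : (fun t => T (e (i+1+1) t))
            = fun t => glue (fun u => T (Dp (i+1) u)) (fun u => T (Dm (i+1) u)) t := by
          funext t
          simp only [hedef, if_neg (by omega : ¬ (i+1+1 = 1)), Nat.add_sub_cancel]
          by_cases h : t < 1/2
          · rw [glue_pos h, glue_pos h]
          · rw [glue_neg h, glue_neg h]
        rw [heq, lqNorm_rpow hq0.ne', lqNorm_rpow hq0.ne', lqNorm_rpow hq0.ne']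
        have hcomp : (fun t => ‖glue (fun u => T (Dp (i+1) u)) (fun u => T (Dm (i+1) u)) t‖ ^ q)
            = glue (fun u => ‖T (Dp (i+1) u)‖ ^ q) (fun u => ‖T (Dm (i+1) u)‖ ^ q) := by
          funext t
          by_cases h : t < 1/2
          · rw [glue_pos h, glue_pos h]
          · rw [glue_neg h, glue_neg h]
        rw [hcomp]
        exact integral_glue
          (dyadicMeas_comp (fun z => ‖T z‖ ^ q) (dyadicMeas_mono him (hDp (i+1) (by omega) him).1))
          (dyadicMeas_comp (fun z => ‖T z‖ ^ q) (dyadicMeas_mono him (hDm (i+1) (by omega) him).1))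
      rw [Finset.sum_congr rfl hterm]
      rw [← Finset.sum_div, Finset.sum_add_distrib]
      have hP : ∑ i ∈ range m, LqNorm q (fun t => T (Dp (i+1) t)) ^ q
          = ∑ k ∈ Finset.Icc 1 np, LqNorm q (fun t => T (dp k t)) ^ q := by
        have h0 : ∑ i ∈ range m, LqNorm q (fun t => T (Dp (i+1) t)) ^ q
            = ∑ k ∈ Finset.Icc 1 m, LqNorm q (fun t => T (Dp k t)) ^ q :=
          (sum_Icc_one m (fun k => LqNorm q (fun t => T (Dp k t)) ^ q)).symm
        rw [h0, pad_sum (le_max_left np nm) _ (fun k hk => by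
          simp only [hDpdef, if_neg (by omega : ¬ k ≤ np), map_zero]
          rw [show (fun t : ℝ => (0:Y)) = fun _ : ℝ => (0:Y) from rfl, lqNorm_const hq0.ne']
          simp [Real.zero_rpow hq0.ne'])]
        refine Finset.sum_congr rfl fun k hk => ?_
        simp only [hDpdef, if_pos (Finset.mem_Icc.mp hk).2]
      have hM : ∑ i ∈ range m, LqNorm q (fun t => T (Dm (i+1) t)) ^ q
          = ∑ k ∈ Finset.Icc 1 nm, LqNorm q (fun t => T (dm k t)) ^ q := by
        have h0 : ∑ i ∈ range m, LqNorm q (fun t => T (Dm (i+1) t)) ^ q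
            = ∑ k ∈ Finset.Icc 1 m, LqNorm q (fun t => T (Dm k t)) ^ q :=
          (sum_Icc_one m (fun k => LqNorm q (fun t => T (Dm k t)) ^ q)).symm
        rw [h0, pad_sum (le_max_right np nm) _ (fun k hk => by
          simp only [hDmdef, if_neg (by omega : ¬ k ≤ nm), map_zero]
          rw [show (fun t : ℝ => (0:Y)) = fun _ : ℝ => (0:Y) from rfl, lqNorm_const hq0.ne']
          simp [Real.zero_rpow hq0.ne'])]
        refine Finset.sum_congr rfl fun k hk => ?_
        simp only [hDmdef, if_pos (Finset.mem_Icc.mp hk).2]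
      rw [hP, hM]
  rw [hLq1, hTsum, hav, hbv]
  ring

end Glued

section Final
variable {X Y : Type*} [NormedAddCommGroup X] [NormedSpace ℝ X]
  [NormedAddCommGroup Y] [NormedSpace ℝ Y]

lemma K_pow_eq {q c : ℝ} (hq0 : 0 < q) (hc : 0 < c) {T : X →L[ℝ] Y}
    (hT : MartCotype T q c) {K : X → ℝ}
    (hK : ∀ x : X, K x = sInf { r : ℝ | ∃ (n : ℕ) (d : ℕ → ℝ → X),
      (∀ k, 1 ≤ k → k ≤ n → IsDyadicDiff k (d k)) ∧
      r = (LqNorm q (fun t => x + ∑ k ∈ Finset.Icc 1 n, d k t) ^ q -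
            c⁻¹ ^ q * ∑ k ∈ Finset.Icc 1 n, LqNorm q (fun t => T (d k t)) ^ q) ^ (1/q) })
    (x : X) : 0 ≤ K x ∧ K x ^ q = sInf (innerSet q c T x) := by
  set S := { r : ℝ | ∃ (n : ℕ) (d : ℕ → ℝ → X),
      (∀ k, 1 ≤ k → k ≤ n → IsDyadicDiff k (d k)) ∧
      r = (LqNorm q (fun t => x + ∑ k ∈ Finset.Icc 1 n, d k t) ^ q -
            c⁻¹ ^ q * ∑ k ∈ Finset.Icc 1 n, LqNorm q (fun t => T (d k t)) ^ q) ^ (1/q) } with hS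
  have himg : S = (fun a => a ^ (1/q)) '' innerSet q c T x := by
    ext r
    constructor
    · rintro ⟨n, d, hd, rfl⟩
      exact ⟨_, ⟨n, d, hd, rfl⟩, rfl⟩
    · rintro ⟨a, ⟨n, d, hd, rfl⟩, rfl⟩
      exact ⟨n, d, hd, rfl⟩
  have hSne : S.Nonempty := by
    rw [himg]
    exact Set.Nonempty.image _ (innerSet_nonempty T x)
  have hSnn : ∀ r ∈ S, 0 ≤ r := by
    rw [himg]
    rintro r ⟨a, _, rfl⟩
    exact Real.rpow_nonneg (innerSet_nonneg hq0 hc hT ‹_›) _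
  have hSbdd : BddBelow S := ⟨0, hSnn⟩
  have hK0 : 0 ≤ K x := by
    rw [hK x, ← hS]
    exact le_csInf hSne hSnn
  refine ⟨hK0, ?_⟩
  set g : ℝ → ℝ := fun r => (r ⊔ 0) ^ q with hg
  have hmono : Monotone g := fun r s h =>
    Real.rpow_le_rpow (le_max_right r 0) (max_le_max h le_rfl) hq0.le
  have hcont : ContinuousAt g (sInf S) := by
    have h1 : ContinuousAt (fun r : ℝ => r ⊔ 0) (sInf S) :=
      (continuous_id.max continuous_const).continuousAt
    have h2 : ContinuousAt (fun y : ℝ => y ^ q) ((sInf S) ⊔ 0) :=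
      Real.continuousAt_rpow_const _ q (Or.inr hq0.le)
    exact ContinuousAt.comp (x := sInf S) h2 h1
  have himg2 : g '' S = innerSet q c T x := by
    rw [himg, ← Set.image_comp]
    have heqon : Set.EqOn (g ∘ fun a => a ^ (1/q)) id (innerSet q c T x) := by
      intro a ha
      have ha0 := innerSet_nonneg hq0 hc hT ha
      simp only [Function.comp, hg, id]
      rw [max_eq_left (Real.rpow_nonneg ha0 _), one_div, Real.rpow_inv_rpow ha0 hq0.ne']
    rw [Set.image_congr heqon, Set.image_id]
  have hKx : K x = sInf S := by rw [hS]; exact hK x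
  calc K x ^ q = g (K x) := by simp only [hg, max_eq_left hK0]
    _ = g (sInf S) := by rw [hKx]
    _ = sInf (g '' S) := hmono.map_csInf_of_continuousAt hcont hSne hSbdd
    _ = sInf (innerSet q c T x) := by rw [himg2]

end Final

theorem stmt_12 {X Y : Type*} [NormedAddCommGroup X] [NormedSpace ℝ X] [CompleteSpace X]
    [NormedAddCommGroup Y] [NormedSpace ℝ Y] [CompleteSpace Y]
    (q c : ℝ) (hq : 2 ≤ q) (hc : 0 < c) (T : X →L[ℝ] Y)
    (hT : MartCotype T q c)
    (K : X → ℝ)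
    (hK : ∀ x : X, K x = sInf { r : ℝ | ∃ (n : ℕ) (d : ℕ → ℝ → X),
      (∀ k, 1 ≤ k → k ≤ n → IsDyadicDiff k (d k)) ∧
      r = (LqNorm q (fun t => x + ∑ k ∈ Finset.Icc 1 n, d k t) ^ q -
            c⁻¹ ^ q * ∑ k ∈ Finset.Icc 1 n, LqNorm q (fun t => T (d k t)) ^ q) ^ (1/q) }) :
    ∀ xp xm : X,
      K ((2:ℝ)⁻¹ • (xp + xm)) ^ q ≤
        (K xp ^ q + K xm ^ q) / 2 - c⁻¹ ^ q * ‖(2:ℝ)⁻¹ • (T xp - T xm)‖ ^ q := by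
  intro xp xm
  have hq0 : (0:ℝ) < q := by linarith
  set tm := c⁻¹ ^ q * ‖(2:ℝ)⁻¹ • (T xp - T xm)‖ ^ q with htm
  have hKmid := K_pow_eq hq0 hc hT hK ((2:ℝ)⁻¹ • (xp + xm))
  have hKp := K_pow_eq hq0 hc hT hK xp
  have hKm := K_pow_eq hq0 hc hT hK xm
  have key : ∀ a ∈ innerSet q c T xp, ∀ b ∈ innerSet q c T xm,
      K ((2:ℝ)⁻¹ • (xp + xm)) ^ q ≤ (a + b)/2 - tm := by
    intro a ha b hb
    rw [hKmid.2]
    exact csInf_le (innerSet_bddBelow hq0 hc hT _) (glued_step hq0 hc T xp xm ha hb)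
  have h1 : ∀ b ∈ innerSet q c T xm,
      2 * (K ((2:ℝ)⁻¹ • (xp + xm)) ^ q + tm) - K xp ^ q ≤ b := by
    intro b hb
    have h2 : ∀ a ∈ innerSet q c T xp,
        2 * (K ((2:ℝ)⁻¹ • (xp + xm)) ^ q + tm) - b ≤ a := by
      intro a ha
      have := key a ha b hb
      linarith
    have h3 := le_csInf (innerSet_nonempty T xp) h2
    rw [← hKp.2] at h3
    linarith
  have h4 := le_csInf (innerSet_nonempty T xm) h1
  rw [← hKm.2] at h4
  linarith
end
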